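/- arXiv:2304.01278 — 2 statements merged into one kernel-verified Lean document; each statement's English description precedes it below -/
import Mathlib

section
/- For every masked semilinear set S = ∪_m (S_m + m) (union over all masks m of Σ) there exists an oblivious masked semilinear set T = ∪_m (T_m + m) defining the same subset of 𝕄^Σ, such that every T_m is in canonical m-oblivious form (in particular each T_m is semilinear and m-oblivious). -/
/-!
Let `z` be the linear projection of `ℕ^A` that zeroes the coordinates where the mask `m` is `∞`.
Since `x + m` depends only on `z x`, replacing `S_m` by `z⁻¹(z(S_m))` does not change `S_m + m`
and makes the set `m`-oblivious. It is semilinear, indeed in canonical form, because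
`z⁻¹(z(Lin(b, P))) = Lin(z b, z(P) ∪ E_m)`: on the finite coordinates both sides are governed by
`z`, and `E_m` generates every vector supported on the `∞` coordinates.
-/

open scoped Classical

/-- A (nondeterministic) Büchi automaton over alphabet `A`, with a finite state set. -/
structure BuchiAutomaton (A : Type) : Type 1 where
  Q : Type
  fin : Fintype Q
  step : Q → A → Set Q
  init : Set Q
  accept : Set Q

attribute [instance] BuchiAutomaton.fin

/-- A run of the automaton on an infinite word. -/
def BuchiAutomaton.IsRun {A : Type} (M : BuchiAutomaton A) (w : ℕ → A) (ρ : ℕ → M.Q) : Prop :=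
  ρ 0 ∈ M.init ∧ ∀ i, ρ (i + 1) ∈ M.step (ρ i) (w i)

/-- The language of a Büchi automaton: words admitting a run visiting the accepting set
infinitely often. -/
def BuchiAutomaton.lang {A : Type} (M : BuchiAutomaton A) : Set (ℕ → A) :=
  {w | ∃ ρ, M.IsRun w ρ ∧ ∀ n, ∃ m, n ≤ m ∧ ρ m ∈ M.accept}

/-- A Büchi automaton is deterministic if it has a unique initial state and
every transition set is a singleton. -/
def BuchiAutomaton.Deterministic {A : Type} (M : BuchiAutomaton A) : Prop :=
  (∃ q, M.init = {q}) ∧ ∀ q a, ∃ p, M.step q a = {p}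

/-- Parikh image of an infinite word: number of occurrences of each letter (`⊤` if infinite). -/
noncomputable def parikhInf {A : Type} (w : ℕ → A) : A → ℕ∞ :=
  fun a => {i : ℕ | w i = a}.encard

/-- The jumping language of a Büchi automaton. -/
def JumpLang {A : Type} (M : BuchiAutomaton A) : Set (ℕ → A) :=
  {w | ∃ w', parikhInf w' = parikhInf w ∧ w' ∈ M.lang}

/-- Number of occurrences of letter `a` in the `i`-th window of size `k` of `w`. -/
noncomputable def winCount {A : Type} (w : ℕ → A) (k i : ℕ) (a : A) : ℕ :=
  {j : ℕ | k * i ≤ j ∧ j < k * i + k ∧ w j = a}.ncard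

/-- `w` and `w'` are `k`-window permutations of each other. -/
def KWinPerm {A : Type} (k : ℕ) (w w' : ℕ → A) : Prop :=
  ∀ i a, winCount w k i a = winCount w' k i a

/-- The `k`-window jumping language of a Büchi automaton. -/
def KWinLang {A : Type} (M : BuchiAutomaton A) (k : ℕ) : Set (ℕ → A) :=
  {w | ∃ w', KWinPerm k w' w ∧ w' ∈ M.lang}

/-- The `∃`-window jumping language of a Büchi automaton. -/
def EWinLang {A : Type} (M : BuchiAutomaton A) : Set (ℕ → A) :=
  {w | ∃ k, 1 ≤ k ∧ ∃ w', KWinPerm k w' w ∧ w' ∈ M.lang}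

/-- Linear subsets of `ℕ^A`. -/
def IsLinearSetVec {A : Type} (R : Set (A → ℕ)) : Prop :=
  ∃ (b : A → ℕ) (P : Finset (A → ℕ)),
    R = {v | ∃ c : (A → ℕ) → ℕ, v = b + ∑ p ∈ P, c p • p}

/-- Semilinear sets: finite unions of linear sets. -/
def IsSemilinearSetVec {A : Type} (R : Set (A → ℕ)) : Prop :=
  ∃ (n : ℕ) (f : Fin n → Set (A → ℕ)), (∀ i, IsLinearSetVec (f i)) ∧ R = ⋃ i, f i

/-- A mask: a vector over `{0,∞}` with at least one `∞` coordinate. -/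
def IsMask {A : Type} (m : A → ℕ∞) : Prop :=
  (∀ a, m a = 0 ∨ m a = ⊤) ∧ ∃ a, m a = ⊤

/-- Adding a mask to a vector of naturals. -/
def maskAdd {A : Type} (x : A → ℕ) (m : A → ℕ∞) : A → ℕ∞ :=
  fun a => (x a : ℕ∞) + m a

/-- Adding a mask to a set of vectors, `R + m`. -/
def maskAddSet {A : Type} (R : Set (A → ℕ)) (m : A → ℕ∞) : Set (A → ℕ∞) :=
  (fun x => maskAdd x m) '' R

/-- `𝕄^A`: extended-natural vectors with at least one `∞` coordinate. -/
def MVecs (A : Type) : Set (A → ℕ∞) := {v | ∃ a, v a = ⊤}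

/-- Masked semilinear set: a union `⋃_m (S_m + m)` over all masks `m`, with each `S_m`
semilinear. -/
def IsMaskedSemilinear {A : Type} (S : Set (A → ℕ∞)) : Prop :=
  ∃ F : (A → ℕ∞) → Set (A → ℕ),
    (∀ m, IsMask m → IsSemilinearSetVec (F m)) ∧
    S = ⋃ m ∈ {m' : A → ℕ∞ | IsMask m'}, maskAddSet (F m) m

/-- `R` is `m`-oblivious: membership only depends on the `m`-equivalence class. -/
def MOblivious {A : Type} (m : A → ℕ∞) (R : Set (A → ℕ)) : Prop :=
  ∀ u v : A → ℕ, maskAdd u m = maskAdd v m → (u ∈ R ↔ v ∈ R)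

/-- `E_m`: unit vectors at the `∞` coordinates of the mask `m`. -/
noncomputable def maskUnits {A : Type} [Fintype A] [DecidableEq A] (m : A → ℕ∞) :
    Finset (A → ℕ) :=
  (Finset.univ.filter (fun a => m a = ⊤)).image (fun a => Pi.single a 1)

/-- `R` is in canonical `m`-oblivious form. -/
def CanonicalOblivious {A : Type} [Fintype A] [DecidableEq A] (m : A → ℕ∞)
    (R : Set (A → ℕ)) : Prop :=
  ∃ (n : ℕ) (b : Fin n → (A → ℕ)) (P : Fin n → Finset (A → ℕ)),
    (∀ i a, m a = ⊤ → b i a = 0) ∧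
    (∀ i p, p ∈ P i → ∀ a, m a = ⊤ → p a = 0) ∧
    R = ⋃ i, {v | ∃ c : (A → ℕ) → ℕ, v = b i + ∑ p ∈ (P i ∪ maskUnits m), c p • p}

section MaskProjection

variable {A : Type}

/-- The linear set `Lin(b, P)`. -/
def linSet (b : A → ℕ) (P : Finset (A → ℕ)) : Set (A → ℕ) :=
  {v | ∃ c : (A → ℕ) → ℕ, v = b + ∑ p ∈ P, c p • p}

theorem mem_linSet_iff {b v : A → ℕ} {P : Finset (A → ℕ)} :
    v ∈ linSet b P ↔ ∃ y ∈ Submodule.span ℕ (P : Set (A → ℕ)), v = b + y := by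
  simp only [linSet, Set.mem_ofPred_eq, Submodule.mem_span_finset]
  constructor
  · rintro ⟨c, rfl⟩
    refine ⟨_, ⟨fun p => if p ∈ P then c p else 0, ?_, ?_⟩, rfl⟩
    · exact Function.support_subset_iff'.2 fun p hp => if_neg hp
    · exact Finset.sum_congr rfl fun p hp => by simp only [if_pos hp]
  · rintro ⟨_, ⟨c, -, rfl⟩, rfl⟩
    exact ⟨c, rfl⟩

def maskProj (m : A → ℕ∞) : (A → ℕ) →ₗ[ℕ] (A → ℕ) where
  toFun x a := if m a = ⊤ then 0 else x a
  map_add' x y := by ext a; by_cases h : m a = ⊤ <;> simp [h]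
  map_smul' c x := by ext a; by_cases h : m a = ⊤ <;> simp [h]

variable {m : A → ℕ∞}

@[simp]
theorem maskProj_apply_of_eq_top (x : A → ℕ) {a : A} (ha : m a = ⊤) : maskProj m x a = 0 :=
  if_pos ha

@[simp]
theorem maskProj_apply_of_ne_top (x : A → ℕ) {a : A} (ha : m a ≠ ⊤) : maskProj m x a = x a :=
  if_neg ha

theorem maskProj_le (x : A → ℕ) : maskProj m x ≤ x := by
  intro a
  by_cases ha : m a = ⊤ <;> simp [ha]

@[simp]
theorem maskProj_maskProj (x : A → ℕ) : maskProj m (maskProj m x) = maskProj m x := by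
  ext a
  by_cases ha : m a = ⊤ <;> simp [ha]

theorem maskAdd_eq_maskAdd_iff {u v : A → ℕ} :
    maskAdd u m = maskAdd v m ↔ maskProj m u = maskProj m v := by
  simp only [funext_iff, maskAdd]
  refine forall_congr' fun a => ?_
  by_cases ha : m a = ⊤ <;> simp [ha]

theorem mOblivious_preimage_maskProj (R : Set (A → ℕ)) : MOblivious m (maskProj m ⁻¹' R) := by
  intro u v huv
  rw [Set.mem_preimage, Set.mem_preimage, maskAdd_eq_maskAdd_iff.mp huv]

theorem maskAddSet_preimage_image_maskProj (S : Set (A → ℕ)) :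
    maskAddSet (maskProj m ⁻¹' (maskProj m '' S)) m = maskAddSet S m := by
  ext w
  constructor
  · rintro ⟨v, ⟨x, hx, hxv⟩, rfl⟩
    exact ⟨x, hx, maskAdd_eq_maskAdd_iff.mpr hxv⟩
  · rintro ⟨x, hx, rfl⟩
    exact ⟨x, ⟨x, hx, rfl⟩, rfl⟩

end MaskProjection

section Canonical

variable {A : Type} [Fintype A] [DecidableEq A] {m : A → ℕ∞}

theorem span_maskUnits_le_ker_maskProj :
    Submodule.span ℕ (maskUnits m : Set (A → ℕ)) ≤ LinearMap.ker (maskProj m) := by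
  rw [Submodule.span_le]
  intro e he
  obtain ⟨a, ha, rfl⟩ := Finset.mem_image.mp (Finset.mem_coe.mp he)
  ext a'
  by_cases ha' : a' = a
  · subst ha'
    simp [(Finset.mem_filter.mp ha).2]
  · by_cases hma' : m a' = ⊤ <;> simp [hma', Pi.single_eq_of_ne ha']

theorem sub_maskProj_mem_span_maskUnits (v : A → ℕ) :
    v - maskProj m v ∈ Submodule.span ℕ (maskUnits m : Set (A → ℕ)) := by
  rw [← Finset.univ_sum_single (v - maskProj m v)]
  refine Submodule.sum_mem _ fun a _ => ?_
  by_cases ha : m a = ⊤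
  · have he : Pi.single a 1 ∈ maskUnits m :=
      Finset.mem_image_of_mem _ (Finset.mem_filter.mpr ⟨Finset.mem_univ a, ha⟩)
    have hsmul : Pi.single a (v a) = v a • (Pi.single a 1 : A → ℕ) := by
      ext a'
      by_cases h : a' = a <;> simp [h]
    rw [Pi.sub_apply, maskProj_apply_of_eq_top v ha, tsub_zero, hsmul]
    exact Submodule.smul_mem _ (v a) (Submodule.subset_span he)
  · simp [ha]

theorem preimage_image_maskProj_linSet (b : A → ℕ) (P : Finset (A → ℕ)) :
    maskProj m ⁻¹' (maskProj m '' linSet b P) =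
      linSet (maskProj m b) (P.image (maskProj m) ∪ maskUnits m) := by
  have hspan : Submodule.span ℕ ↑(P.image (maskProj m) ∪ maskUnits m) =
      (Submodule.span ℕ ↑P).map (maskProj m) ⊔ Submodule.span ℕ ↑(maskUnits m) := by
    rw [Finset.coe_union, Finset.coe_image, Submodule.span_union, Submodule.map_span]
  ext v
  constructor
  · rintro ⟨x, hx, hxv⟩
    obtain ⟨y, hy, rfl⟩ := mem_linSet_iff.mp hx
    refine mem_linSet_iff.mpr ⟨maskProj m y + (v - maskProj m v), ?_, ?_⟩
    · rw [hspan]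
      exact Submodule.add_mem_sup (Submodule.mem_map_of_mem hy)
        (sub_maskProj_mem_span_maskUnits v)
    · rw [← add_assoc, ← map_add, hxv, add_tsub_cancel_of_le (maskProj_le v)]
  · intro hv
    obtain ⟨_, hy', rfl⟩ := mem_linSet_iff.mp hv
    rw [hspan] at hy'
    obtain ⟨_, ⟨y, hy, rfl⟩, e, he, rfl⟩ := Submodule.mem_sup.mp hy'
    refine ⟨b + y, mem_linSet_iff.mpr ⟨y, hy, rfl⟩, ?_⟩
    simp only [map_add, maskProj_maskProj, LinearMap.mem_ker.mp (span_maskUnits_le_ker_maskProj he),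
      add_zero]

theorem canonicalOblivious_preimage_image_maskProj {S : Set (A → ℕ)}
    (hS : IsSemilinearSetVec S) : CanonicalOblivious m (maskProj m ⁻¹' (maskProj m '' S)) := by
  obtain ⟨n, f, hlin, rfl⟩ := hS
  choose b P hP using hlin
  refine ⟨n, fun i => maskProj m (b i), fun i => (P i).image (maskProj m),
    fun i a ha => maskProj_apply_of_eq_top _ ha, ?_, ?_⟩
  · intro i p hp a ha
    obtain ⟨x, -, rfl⟩ := Finset.mem_image.mp hp
    exact maskProj_apply_of_eq_top x ha
  · simp only [Set.image_iUnion, Set.preimage_iUnion, hP]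
    exact Set.iUnion_congr fun i => preimage_image_maskProj_linSet (b i) (P i)

theorem CanonicalOblivious.isSemilinearSetVec {R : Set (A → ℕ)} (h : CanonicalOblivious m R) :
    IsSemilinearSetVec R := by
  obtain ⟨n, b, P, -, -, rfl⟩ := h
  exact ⟨n, _, fun i => ⟨b i, P i ∪ maskUnits m, rfl⟩, rfl⟩

end Canonical

/-- Every masked semilinear set has an equivalent oblivious masked semilinear
representation in which every component is in canonical `m`-oblivious form. -/
theorem masked_semilinear_canonical_oblivious (A : Type) [Fintype A] [DecidableEq A]
    (F : (A → ℕ∞) → Set (A → ℕ)) (hF : ∀ m, IsMask m → IsSemilinearSetVec (F m)) :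
    ∃ G : (A → ℕ∞) → Set (A → ℕ),
      (∀ m, IsMask m →
        IsSemilinearSetVec (G m) ∧ MOblivious m (G m) ∧ CanonicalOblivious m (G m)) ∧
      (⋃ m ∈ {m' : A → ℕ∞ | IsMask m'}, maskAddSet (F m) m) =
        (⋃ m ∈ {m' : A → ℕ∞ | IsMask m'}, maskAddSet (G m) m) := by
  refine ⟨fun m => maskProj m ⁻¹' (maskProj m '' F m), fun m hm => ?_,
    Set.iUnion₂_congr fun m _ => (maskAddSet_preimage_image_maskProj (F m)).symm⟩
  have hcanon := canonicalOblivious_preimage_image_maskProj (m := m) (hF m hm)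
  exact ⟨hcanon.isSemilinearSetVec, mOblivious_preimage_maskProj _, hcanon⟩
end

section
/- Let D be the deterministic automaton over Σ = {a,b} with states {q₀,q₁,q₂,q₃, sink}, initial state q₀, accepting set {q₃}, and transitions δ(q₀,a) = q₁, δ(q₀,b) = q₂, δ(q₁,b) = q₀, δ(q₂,b) = q₀, δ(q₂,a) = q₃, δ(q₃,b) = q₃, and all other transitions (δ(q₁,a), δ(q₃,a), and both transitions from sink) going to the non-accepting sink state. Then for every k ≥ 2 there is no deterministic Büchi automaton B over Σ with L(B) = J_k⊞(D). -/
open scoped Classical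

/-- The deterministic automaton `D` of Statement 10, over `Σ = {a,b}` (with `a = 0`, `b = 1`),
states `q₀,…,q₃, sink` encoded as `0,…,3,4`. -/
def D10 : BuchiAutomaton (Fin 2) where
  Q := Fin 5
  fin := inferInstance
  step q a := {(![![1, 2], ![4, 0], ![3, 0], ![4, 3], ![4, 4]] : Fin 5 → Fin 2 → Fin 5) q a}
  init := {0}
  accept := {3}

/-!
A deterministic Büchi automaton accepts a word iff its unique run visits an accepting state at
infinitely many times, and the run up to time `t` depends only on the first `t` letters. Every
word with finitely many, but at least one, `a`s at positions `2k·c` lies in `J_k(D)`: moving the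
last `a` one step to the right inside its window gives a word of `(ab + bb)* ba b^ω`. If a
deterministic `B` recognized `J_k(D)`, we could therefore add such `a`s forever, each one beyond
a time at which the run of `B` on the current word is accepting. The run on the limit word passes
through all these accepting times, so `B` accepts it, yet it has infinitely many `a`s, whereas
every word of `J_k(D)` ends in `b^ω`.
-/

theorem exists_seq_eq_apply_image {α : Type*} [DecidableEq α] (next : Finset α → α) :
    ∃ g : ℕ → α, ∀ n, g n = next ((Finset.range n).image g) := by
  let hist : ℕ → Finset α := fun n => Nat.rec ∅ (fun _ s => insert (next s) s) n
  refine ⟨fun n => next (hist n), fun n => congrArg next ?_⟩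
  induction n with
  | zero => rfl
  | succ n ih => rw [Finset.range_add_one, Finset.image_insert, ← ih]

namespace BuchiAutomaton

variable {A Q : Type}

def detRun (q₀ : Q) (δ : Q → A → Q) (w : ℕ → A) : ℕ → Q
  | 0 => q₀
  | n + 1 => δ (detRun q₀ δ w n) (w n)

theorem detRun_congr {q₀ : Q} {δ : Q → A → Q} {w w' : ℕ → A} {n : ℕ}
    (h : ∀ j < n, w j = w' j) : detRun q₀ δ w n = detRun q₀ δ w' n := by
  induction n with
  | zero => rfl
  | succ n ih => simp only [detRun, ih fun j hj => h j (by omega), h n (by omega)]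

theorem mem_lang_iff_detRun {M : BuchiAutomaton A} {q₀ : M.Q} {δ : M.Q → A → M.Q}
    (hinit : M.init = {q₀}) (hstep : ∀ q a, M.step q a = {δ q a}) {w : ℕ → A} :
    w ∈ M.lang ↔ ∀ n, ∃ m, n ≤ m ∧ detRun q₀ δ w m ∈ M.accept := by
  have hrun : ∀ ρ, M.IsRun w ρ ↔ ρ = detRun q₀ δ w := by
    intro ρ
    simp only [IsRun, hinit, hstep, Set.mem_singleton_iff]
    refine ⟨fun ⟨h0, hs⟩ => funext fun n => ?_, fun h => h ▸ ⟨rfl, fun _ => rfl⟩⟩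
    induction n with
    | zero => exact h0
    | succ n ih => rw [hs, ih, detRun]
  simp only [lang, Set.mem_ofPred_eq, hrun, exists_eq_left]

theorem Deterministic.exists_infinite_mem_lang {M : BuchiAutomaton A}
    (hM : M.Deterministic) {word : Set ℕ → ℕ → A}
    (hword : ∀ C j, word C j = word (C ∩ Set.Iic j) j)
    (hfin : ∀ C : Finset ℕ, C.Nonempty → word C ∈ M.lang) :
    ∃ C : Set ℕ, C.Infinite ∧ word C ∈ M.lang := by
  obtain ⟨⟨q₀, hinit⟩, hstep⟩ := hM
  choose δ hδ using hstep
  simp only [mem_lang_iff_detRun hinit hδ] at hfin ⊢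
  obtain ⟨g, hg⟩ := exists_seq_eq_apply_image fun C : Finset ℕ =>
    sInf {t | C.sup id < t ∧ detRun q₀ δ (word C) t ∈ M.accept}
  set stage : ℕ → Finset ℕ := fun n => (Finset.range (n + 1)).image g
  have hnext : ∀ n, (stage n).sup id < g (n + 1) ∧
      detRun q₀ δ (word (stage n)) (g (n + 1)) ∈ M.accept := by
    intro n
    obtain ⟨t, ht, hacc⟩ := hfin (stage n) (by simp [stage]) ((stage n).sup id + 1)
    rw [hg (n + 1)]
    exact Nat.sInf_mem (s := {t | (stage n).sup id < t ∧
      detRun q₀ δ (word (stage n)) t ∈ M.accept}) ⟨t, ht, hacc⟩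
  have hmono : StrictMono g := strictMono_nat_of_lt_succ fun n =>
    (Finset.le_sup (f := id) (Finset.mem_image_of_mem g (Finset.self_mem_range_succ n))).trans_lt
      (hnext n).1
  refine ⟨Set.range g, Set.infinite_range_of_injective hmono.injective, fun n => ?_⟩
  refine ⟨g (n + 1), (Nat.le_succ n).trans (hmono.id_le _), ?_⟩
  have hprefix : ∀ j < g (n + 1), Set.range g ∩ Set.Iic j = ↑(stage n) ∩ Set.Iic j := by
    intro j hj
    ext c
    simp only [Set.mem_inter_iff, Set.mem_range, Set.mem_Iic, stage, Finset.coe_image,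
      Finset.coe_range, Set.mem_image, Set.mem_Iio]
    constructor
    · rintro ⟨⟨m, rfl⟩, hm⟩
      exact ⟨⟨m, hmono.lt_iff_lt.mp (by omega), rfl⟩, hm⟩
    · rintro ⟨⟨m, -, rfl⟩, hm⟩
      exact ⟨⟨m, rfl⟩, hm⟩
  rw [detRun_congr fun j hj => by rw [hword, hprefix j hj, ← hword]]
  exact (hnext n).2

end BuchiAutomaton

open Filter

theorem winCount_eq_zero_iff {A : Type} {w : ℕ → A} {k i : ℕ} {a : A} :
    winCount w k i a = 0 ↔ ∀ j, k * i ≤ j → j < k * i + k → w j ≠ a := by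
  rw [winCount, Set.ncard_eq_zero ((Set.finite_Iio (k * i + k)).subset fun j hj => hj.2.1)]
  simp [Set.eq_empty_iff_forall_notMem]

theorem KWinPerm.eventually_ne {A : Type} {k : ℕ} (hk : 0 < k) {w w' : ℕ → A}
    (h : KWinPerm k w w') {a : A} (hw : ∀ᶠ j in atTop, w j ≠ a) :
    ∀ᶠ j in atTop, w' j ≠ a := by
  obtain ⟨N, hN⟩ := eventually_atTop.1 hw
  refine eventually_atTop.2 ⟨k * N, fun j hj => ?_⟩
  have hNj : N ≤ j / k := (Nat.le_div_iff_mul_le hk).2 (by rwa [mul_comm])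
  have hwin : k * (j / k) ≤ j ∧ j < k * (j / k) + k := by
    have := Nat.div_add_mod j k
    have := Nat.mod_lt j hk
    omega
  have hzero : winCount w' k (j / k) a = 0 := by
    rw [← h, winCount_eq_zero_iff]
    intro j' hj' _
    exact hN j' (hNj.trans ((Nat.le_mul_of_pos_left _ hk).trans hj'))
  exact winCount_eq_zero_iff.1 hzero j hwin.1 hwin.2

theorem kWinPerm_comp_perm {A : Type} {k : ℕ} (hk : 0 < k) (w : ℕ → A) {σ : Equiv.Perm ℕ}
    (hσ : ∀ j, σ j / k = j / k) : KWinPerm k (w ∘ σ) w := by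
  intro i a
  have hwin : ∀ j, (k * i ≤ j ∧ j < k * i + k) ↔ j / k = i := fun j => by
    rw [Nat.div_eq_iff hk, mul_comm]
    omega
  have hpre : {j | k * i ≤ j ∧ j < k * i + k ∧ (w ∘ σ) j = a} =
      σ ⁻¹' {j | k * i ≤ j ∧ j < k * i + k ∧ w j = a} := by
    ext j
    simp only [Set.mem_ofPred_eq, Set.mem_preimage, Function.comp_apply, ← and_assoc, hwin, hσ]
  rw [winCount, hpre, Set.ncard_preimage_of_injective_subset_range σ.injective (by simp)]
  rfl

noncomputable def aWord (P : Set ℕ) : ℕ → Fin 2 := fun j => if j ∈ P then 0 else 1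

theorem aWord_image_inter_Iic {f : ℕ → ℕ} (hf : ∀ c, c ≤ f c) (C : Set ℕ) (j : ℕ) :
    aWord (f '' C) j = aWord (f '' (C ∩ Set.Iic j)) j := by
  have hmem : j ∈ f '' C ↔ j ∈ f '' (C ∩ Set.Iic j) := by
    refine ⟨?_, fun h => Set.image_mono Set.inter_subset_left h⟩
    rintro ⟨c, hc, rfl⟩
    exact ⟨c, ⟨hc, hf c⟩, rfl⟩
  simp only [aWord, hmem]

theorem kWinPerm_aWord_insert {k : ℕ} (hk : 0 < k) {P : Set ℕ} {j j' : ℕ} (hj : j ∉ P)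
    (hj' : j' ∉ P) (hjj' : j / k = j' / k) :
    KWinPerm k (aWord (insert j P)) (aWord (insert j' P)) := by
  have hswap : aWord (insert j P) = aWord (insert j' P) ∘ Equiv.swap j j' := by
    funext x
    simp only [aWord, Function.comp_apply, Equiv.swap_apply_def, Set.mem_insert_iff]
    split_ifs <;> simp_all
  rw [hswap]
  refine kWinPerm_comp_perm hk _ fun x => ?_
  rw [Equiv.swap_apply_def]
  split_ifs <;> simp_all

namespace D10

open BuchiAutomaton

def transition : Fin 5 → Fin 2 → Fin 5 := ![![1, 2], ![4, 0], ![3, 0], ![4, 3], ![4, 4]]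

theorem mem_lang_iff {w : ℕ → Fin 2} :
    w ∈ D10.lang ↔ ∀ n, ∃ m, n ≤ m ∧ detRun 0 transition w m = 3 :=
  mem_lang_iff_detRun (M := D10) rfl fun _ _ => rfl

theorem eventually_ne_zero_of_mem_lang {w : ℕ → Fin 2} (hw : w ∈ D10.lang) :
    ∀ᶠ j in atTop, w j ≠ 0 := by
  rw [mem_lang_iff] at hw
  set ρ := detRun 0 transition w
  have hsink : ∀ i, ρ i ≠ 4 := by
    intro i hi
    have hstuck : ∀ j, i ≤ j → ρ j = 4 := fun j hij => by
      induction j, hij using Nat.le_induction with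
      | base => exact hi
      | succ j _ ih =>
        change transition (ρ j) (w j) = 4
        rw [ih]
        generalize w j = x
        fin_cases x <;> rfl
    obtain ⟨m, him, hm⟩ := hw i
    exact absurd (hstuck m him) (by rw [hm]; decide)
  have hstay : ∀ i, ρ i = 3 → w i ≠ 0 ∧ ρ (i + 1) = 3 := by
    intro i hi
    have hnext : transition 3 (w i) ≠ 4 := hi ▸ hsink (i + 1)
    change w i ≠ 0 ∧ transition (ρ i) (w i) = 3
    rw [hi]
    revert hnext
    generalize w i = x
    fin_cases x <;> decide
  obtain ⟨m₀, -, hm₀⟩ := hw 0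
  have hfinal : ∀ i, m₀ ≤ i → ρ i = 3 := fun i hi => by
    induction i, hi using Nat.le_induction with
    | base => exact hm₀
    | succ i _ ih => exact (hstay i ih).2
  exact eventually_atTop.2 ⟨m₀, fun i hi => (hstay i (hfinal i hi)).1⟩

theorem aWord_insert_mem_lang {P : Set ℕ} {r : ℕ} (hP : ∀ j ∈ P, Even j ∧ j < 2 * r) :
    aWord (insert (2 * r + 1) P) ∈ D10.lang := by
  rw [mem_lang_iff]
  set w := aWord (insert (2 * r + 1) P)
  set ρ := detRun 0 transition w
  have hb : ∀ j, j ≠ 2 * r + 1 → (Even j → 2 * r ≤ j) → w j = 1 := by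
    intro j hj hle
    have hjP : j ∉ P := fun hjP => by have := hP j hjP; have := hle this.1; omega
    simp [w, aWord, hj, hjP]
  have hpairs : ∀ i ≤ r, ρ (2 * i) = 0 := by
    intro i hi
    induction i with
    | zero => rfl
    | succ i ih =>
      have hodd : w (2 * i + 1) = 1 := hb _ (by omega) fun h => absurd h (by simp [parity_simps])
      change transition (transition (ρ (2 * i)) (w (2 * i))) (w (2 * i + 1)) = 0
      rw [ih (by omega), hodd]
      generalize w (2 * i) = x
      fin_cases x <;> rfl
  have htail : ∀ j, 2 * r + 2 ≤ j → ρ j = 3 := by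
    intro j hj
    induction j, hj using Nat.le_induction with
    | base =>
      have ha : w (2 * r + 1) = 0 := by simp [w, aWord]
      change transition (transition (ρ (2 * r)) (w (2 * r))) (w (2 * r + 1)) = 3
      rw [hpairs r le_rfl, hb (2 * r) (by omega) fun _ => le_rfl, ha]
      rfl
    | succ j hj ih =>
      change transition (ρ j) (w j) = 3
      rw [ih, hb j (by omega) fun _ => by omega]
      rfl
  exact fun n => ⟨n + 2 * r + 2, by omega, htail _ (by omega)⟩

theorem aWord_image_mem_kWinLang {k : ℕ} (hk : 2 ≤ k) {C : Finset ℕ} (hC : C.Nonempty) :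
    aWord ((2 * k * ·) '' C) ∈ KWinLang D10 k := by
  set m := C.max' hC
  set P := (2 * k * ·) '' ↑(C.erase m)
  have hCP : (2 * k * ·) '' ↑C = insert (2 * (k * m)) P := by
    rw [← Finset.insert_erase (C.max'_mem hC), Finset.coe_insert, Set.image_insert_eq, mul_assoc]
  have hP : ∀ j ∈ P, Even j ∧ j < 2 * (k * m) := by
    rintro _ ⟨c, hc, rfl⟩
    have hcm : c < m := C.lt_max'_of_mem_erase_max' hC hc
    refine ⟨by simp [mul_assoc], show 2 * k * c < 2 * (k * m) from ?_⟩
    rw [mul_assoc]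
    exact Nat.mul_lt_mul_of_pos_left (Nat.mul_lt_mul_of_pos_left hcm (by omega)) two_pos
  refine ⟨aWord (insert (2 * (k * m) + 1) P), ?_, aWord_insert_mem_lang hP⟩
  rw [hCP]
  have hwindow : ∀ d < k, (2 * (k * m) + d) / k = 2 * m := fun d hd => by
    rw [show 2 * (k * m) + d = d + k * (2 * m) by ring, Nat.add_mul_div_left _ _ (by omega),
      Nat.div_eq_of_lt hd, zero_add]
  refine kWinPerm_aWord_insert (by omega) (fun h => ?_) (fun h => ?_) ?_
  · have := hP _ h; omega
  · exact (hP _ h).2.false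
  · rw [hwindow 1 (by omega), ← hwindow 0 (by omega), add_zero]

theorem finite_of_aWord_mem_kWinLang {k : ℕ} (hk : 0 < k) {P : Set ℕ}
    (h : aWord P ∈ KWinLang D10 k) : P.Finite := by
  obtain ⟨w', hperm, hw'⟩ := h
  have hP := hperm.eventually_ne hk (eventually_ne_zero_of_mem_lang hw')
  rw [← Nat.cofinite_eq_atTop, eventually_cofinite] at hP
  simpa [aWord] using hP

end D10

/-- For every `k ≥ 2`, the `k`-window jumping language of `D` is not
recognized by any deterministic Büchi automaton. -/
theorem no_det_buchi_for_kWinLang_D10 (k : ℕ) (hk : 2 ≤ k) :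
    ¬ ∃ B : BuchiAutomaton (Fin 2), B.Deterministic ∧ B.lang = KWinLang D10 k := by
  rintro ⟨B, hB, hlang⟩
  have hpos : 0 < 2 * k := by omega
  obtain ⟨C, hCinf, hCB⟩ := hB.exists_infinite_mem_lang
    (aWord_image_inter_Iic fun c => Nat.le_mul_of_pos_left c hpos)
    (fun C hC => hlang ▸ D10.aWord_image_mem_kWinLang hk hC)
  rw [hlang] at hCB
  exact hCinf.image (mul_right_injective₀ hpos.ne').injOn |>.not_finite <|
    D10.finite_of_aWord_mem_kWinLang (by omega) hCB
end
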